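/- arXiv:1201.1984 — 2 statements merged into one kernel-verified Lean document; each statement's English description precedes it below -/
import Mathlib

section
/- Fix ε ∈ ℝ with ε ≠ 0, a positive integer N, a natural number n₀, real constants t_{α,n} for 1 ≤ α ≤ N, 0 ≤ n ≤ n₀, and λ > 0, and let w_L(x,λ) = exp(Σ_{n=0}^{n₀} Σ_{α=1}^{N} λ^{n+1−(α−1)/N}·t_{α,n} + (x/(Nε))·log λ). Then for all natural numbers m, l and all x ∈ ℝ: (i) (Γ_L^m (Λ^{Nl} w_L(·,λ)))(x) = λ^l·(∂^m w_L/∂λ^m)(x, λ), and (ii) (Λ^{Nl} (Γ_L^m w_L(·,λ)))(x) = (∂^m/∂λ^m)(λ^l·w_L(x, λ)), where Γ_L^m denotes the m-fold composition of Γ_L and both Γ_L and Λ^{Nl} act in the x-variable. (These are the relations M_L^m 𝔏^l w_L = λ^l ∂_λ^m w_L and 𝔏^l M_L^m w_L = ∂_λ^m(λ^l w_L) at the level of the free wave function.) -/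
/-- The truncated Orlov–Schulman operator `Γ_L`:
`(Γ_L f)(x) = (x/(Nε))·f(x − Nε)
  + Σ_{n=0}^{n₀} Σ_{α=1}^{N} (n + 1 − (α−1)/N)·t_{α,n}·f(x + (Nn − α + 1)ε)`. -/
noncomputable def GammaL (ε : ℝ) (N n₀ : ℕ) (t : ℕ → ℕ → ℝ) (f : ℝ → ℂ) (x : ℝ) : ℂ :=
  ((x / (N * ε) : ℝ) : ℂ) * f (x - N * ε) +
    ∑ n ∈ Finset.range (n₀ + 1), ∑ α ∈ Finset.Icc 1 N,
      ((((n : ℝ) + 1 - ((α : ℝ) - 1) / N) * t α n : ℝ) : ℂ) *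
        f (x + ((N : ℝ) * n - α + 1) * ε)

/-- The free wave function
`w_L(x,λ) = exp(Σ_{n=0}^{n₀} Σ_{α=1}^{N} λ^{n+1−(α−1)/N}·t_{α,n} + (x/(Nε))·log λ)`. -/
noncomputable def wL (ε : ℝ) (N n₀ : ℕ) (t : ℕ → ℕ → ℝ) (x lam : ℝ) : ℂ :=
  Complex.exp
    ((((∑ n ∈ Finset.range (n₀ + 1), ∑ α ∈ Finset.Icc 1 N,
        lam ^ ((n : ℝ) + 1 - ((α : ℝ) - 1) / N) * t α n) +
      (x / (N * ε)) * Real.log lam : ℝ)) : ℂ)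

section Aux

variable {ε : ℝ} (hε : ε ≠ 0) {N : ℕ} (hN : 0 < N) {n₀ : ℕ} {t : ℕ → ℕ → ℝ}

noncomputable def SL (ε : ℝ) (N n₀ : ℕ) (t : ℕ → ℕ → ℝ) (x μ : ℝ) : ℝ :=
  (∑ n ∈ Finset.range (n₀ + 1), ∑ α ∈ Finset.Icc 1 N,
      μ ^ ((n : ℝ) + 1 - ((α : ℝ) - 1) / N) * t α n) + (x / (N * ε)) * Real.log μ

noncomputable def SL' (ε : ℝ) (N n₀ : ℕ) (t : ℕ → ℕ → ℝ) (x μ : ℝ) : ℝ :=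
  (∑ n ∈ Finset.range (n₀ + 1), ∑ α ∈ Finset.Icc 1 N,
      (((n : ℝ) + 1 - ((α : ℝ) - 1) / N) * μ ^ ((n : ℝ) + 1 - ((α : ℝ) - 1) / N - 1)) * t α n)
    + (x / (N * ε)) * μ⁻¹

lemma wL_eq_exp_SL (x μ : ℝ) : wL ε N n₀ t x μ = Complex.exp ((SL ε N n₀ t x μ : ℝ) : ℂ) := rfl

include hε hN in
lemma wL_shift (x k : ℝ) {lam : ℝ} (hlam : 0 < lam) :
    wL ε N n₀ t (x + k * ε) lam = ((lam ^ (k / N) : ℝ) : ℂ) * wL ε N n₀ t x lam := by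
  have hN' : (N : ℝ) ≠ 0 := Nat.cast_ne_zero.mpr hN.ne'
  have h1 : (x + k * ε) / (N * ε) * Real.log lam
      = x / (N * ε) * Real.log lam + k / N * Real.log lam := by
    field_simp
  unfold wL
  rw [h1, ← add_assoc, Complex.ofReal_add, Complex.exp_add, mul_comm]
  congr 1
  rw [← Complex.ofReal_exp]
  congr 1
  rw [Real.rpow_def_of_pos hlam, mul_comm]

lemma wL_contDiffOn (x : ℝ) (n : ℕ) :
    ContDiffOn ℝ n (fun μ : ℝ => wL ε N n₀ t x μ) (Set.Ioi (0:ℝ)) := by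
  intro μ hμ
  have hμ0 : μ ≠ 0 := (ne_of_gt hμ)
  have hS : ContDiffAt ℝ n (SL ε N n₀ t x) μ := by
    unfold SL
    apply ContDiffAt.add
    · apply ContDiffAt.sum; intro p _
      apply ContDiffAt.sum; intro α _
      exact (Real.contDiffAt_rpow_const (Or.inl hμ0)).mul contDiffAt_const
    · exact contDiffAt_const.mul (Real.contDiffAt_log.mpr hμ0)
  have : ContDiffAt ℝ n (fun μ : ℝ => wL ε N n₀ t x μ) μ := by
    simp only [wL_eq_exp_SL]
    exact (Complex.ofRealCLM.contDiff.contDiffAt.comp μ hS).cexp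
  exact this.contDiffWithinAt

lemma wL_hasDerivAt (x : ℝ) {μ : ℝ} (hμ : 0 < μ) :
    HasDerivAt (fun μ : ℝ => wL ε N n₀ t x μ)
      (wL ε N n₀ t x μ * ((SL' ε N n₀ t x μ : ℝ) : ℂ)) μ := by
  have hμ0 : μ ≠ 0 := ne_of_gt hμ
  have hS : HasDerivAt (SL ε N n₀ t x) (SL' ε N n₀ t x μ) μ := by
    unfold SL SL'
    apply HasDerivAt.add
    · apply HasDerivAt.fun_sum; intro n _
      apply HasDerivAt.fun_sum; intro α _
      exact (Real.hasDerivAt_rpow_const (Or.inl hμ0)).mul_const _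
    · simpa using (Real.hasDerivAt_log hμ0).const_mul (x / (N * ε))
  simp only [wL_eq_exp_SL]
  exact hS.ofReal_comp.cexp

include hε hN in
lemma GammaL_wL (x : ℝ) {μ : ℝ} (hμ : 0 < μ) :
    GammaL ε N n₀ t (fun y => wL ε N n₀ t y μ) x
      = wL ε N n₀ t x μ * ((SL' ε N n₀ t x μ : ℝ) : ℂ) := by
  have hN' : (N : ℝ) ≠ 0 := Nat.cast_ne_zero.mpr hN.ne'
  have key : ∀ n α : ℕ, ((N:ℝ) * n - α + 1) / N = (n:ℝ) + 1 - ((α:ℝ) - 1) / N - 1 := by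
    intro n α; field_simp; ring
  have hneg : wL ε N n₀ t (x - (N:ℝ) * ε) μ = ((μ⁻¹ : ℝ) : ℂ) * wL ε N n₀ t x μ := by
    rw [show x - (N:ℝ) * ε = x + (-(N:ℝ)) * ε from by ring, wL_shift hε hN x _ hμ]
    congr 2
    rw [show (-(N:ℝ)) / N = -1 from by field_simp, Real.rpow_neg_one]
  have hsum : ∀ n α : ℕ, wL ε N n₀ t (x + ((N:ℝ) * n - α + 1) * ε) μ
      = ((μ ^ ((n:ℝ) + 1 - ((α:ℝ) - 1) / N - 1) : ℝ) : ℂ) * wL ε N n₀ t x μ := by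
    intro n α
    rw [wL_shift hε hN x _ hμ, key n α]
  have t2 : (∑ n ∈ Finset.range (n₀+1), ∑ α ∈ Finset.Icc 1 N,
        ((((n:ℝ) + 1 - ((α:ℝ) - 1) / N) * t α n : ℝ) : ℂ) *
          wL ε N n₀ t (x + ((N:ℝ) * n - α + 1) * ε) μ)
      = wL ε N n₀ t x μ * (((∑ n ∈ Finset.range (n₀+1), ∑ α ∈ Finset.Icc 1 N,
          (((n:ℝ) + 1 - ((α:ℝ) - 1) / N) * μ ^ ((n:ℝ) + 1 - ((α:ℝ) - 1) / N - 1)) * t α n : ℝ)) : ℂ) := by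
    push_cast
    rw [Finset.mul_sum]
    refine Finset.sum_congr rfl fun n _ => ?_
    rw [Finset.mul_sum]
    refine Finset.sum_congr rfl fun α _ => ?_
    rw [hsum n α]; ring
  unfold GammaL SL'
  beta_reduce
  rw [hneg, t2]
  push_cast
  ring


lemma iteratedDerivWithin_Ioi (n : ℕ) (f : ℝ → ℂ) {x : ℝ} (hx : x ∈ Set.Ioi (0:ℝ)) :
    iteratedDerivWithin n f (Set.Ioi 0) x = iteratedDeriv n f x := by
  simp only [iteratedDerivWithin, iteratedDeriv,
    iteratedFDerivWithin_of_isOpen n isOpen_Ioi hx]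

lemma contDiffOn_cmul {m : ℕ} {c : ℂ} {f : ℝ → ℂ} (hf : ContDiffOn ℝ m f (Set.Ioi (0:ℝ))) :
    ContDiffOn ℝ m (fun μ => c * f μ) (Set.Ioi (0:ℝ)) := by
  simpa [smul_eq_mul] using hf.const_smul c

lemma iteratedDerivWithin_cmul {m : ℕ} (c : ℂ) {f : ℝ → ℂ}
    (hf : ContDiffOn ℝ m f (Set.Ioi (0:ℝ))) {x : ℝ} (hx : x ∈ Set.Ioi (0:ℝ)) :
    iteratedDerivWithin m (fun μ => c * f μ) (Set.Ioi 0) x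
      = c * iteratedDerivWithin m f (Set.Ioi 0) x := by
  have := iteratedDerivWithin_const_smul (R := ℂ) hx (uniqueDiffOn_Ioi 0) c (hf x hx)
  simpa [smul_eq_mul] using this

lemma linWithin {ι : Type*} {m : ℕ} (s : Finset ι) (c : ι → ℂ) (f : ι → ℝ → ℂ)
    (hf : ∀ i, ContDiffOn ℝ m (f i) (Set.Ioi (0:ℝ))) {x : ℝ} (hx : x ∈ Set.Ioi (0:ℝ)) :
    iteratedDerivWithin m (fun μ => ∑ i ∈ s, c i * f i μ) (Set.Ioi 0) x
      = ∑ i ∈ s, c i * iteratedDerivWithin m (f i) (Set.Ioi 0) x := by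
  classical
  induction s using Finset.induction with
  | empty =>
      simp only [Finset.sum_empty]
      simp only [iteratedDerivWithin]
      rw [iteratedFDerivWithin_zero_fun]
      simp
  | @insert a s ha ih =>
      have hadd : (fun μ => ∑ i ∈ insert a s, c i * f i μ)
          = (fun μ => c a * f a μ) + fun μ => ∑ i ∈ s, c i * f i μ := by
        funext μ; simp [Finset.sum_insert ha]
      rw [hadd, iteratedDerivWithin_add hx (uniqueDiffOn_Ioi 0)
        (contDiffOn_cmul (hf a) x hx) (ContDiffOn.sum (fun i _ => contDiffOn_cmul (hf i)) x hx),
        iteratedDerivWithin_cmul (c a) (hf a) hx, ih, Finset.sum_insert ha]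


include hε hN in
lemma GammaL_iter_wL (lam : ℝ) (hlam : 0 < lam) :
    ∀ (m : ℕ) (x : ℝ),
      (fun f => GammaL ε N n₀ t f)^[m] (fun y => wL ε N n₀ t y lam) x
        = iteratedDeriv m (fun μ : ℝ => wL ε N n₀ t x μ) lam := by
  intro m
  induction m with
  | zero => intro x; simp
  | succ m ih =>
    intro x
    have hmem : lam ∈ Set.Ioi (0:ℝ) := hlam
    rw [Function.iterate_succ_apply']
    have hIH : (fun f => GammaL ε N n₀ t f)^[m] (fun y => wL ε N n₀ t y lam)
        = fun y => iteratedDeriv m (fun μ : ℝ => wL ε N n₀ t y μ) lam := funext ih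
    rw [hIH, iteratedDeriv_succ']
    have hev : (deriv fun μ : ℝ => wL ε N n₀ t x μ) =ᶠ[nhds lam]
        fun μ => GammaL ε N n₀ t (fun y => wL ε N n₀ t y μ) x := by
      filter_upwards [isOpen_Ioi.mem_nhds hmem] with μ hμ
      rw [(wL_hasDerivAt x hμ).deriv, GammaL_wL hε hN x hμ]
    rw [hev.iteratedDeriv_eq m]
    have flat : ∀ g : ℕ → ℕ → ℂ,
        (∑ n ∈ Finset.range (n₀+1), ∑ α ∈ Finset.Icc 1 N, g n α)
          = ∑ p ∈ Finset.range (n₀+1) ×ˢ Finset.Icc 1 N, g p.1 p.2 :=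
      fun g => (Finset.sum_product _ _ (fun p => g p.1 p.2)).symm
    symm
    show iteratedDeriv m (fun μ => GammaL ε N n₀ t (fun y => wL ε N n₀ t y μ) x) lam
        = GammaL ε N n₀ t (fun y => iteratedDeriv m (fun μ : ℝ => wL ε N n₀ t y μ) lam) x
    unfold GammaL
    beta_reduce
    simp only [flat]
    rw [← iteratedDerivWithin_Ioi m _ hmem]
    have h1 : ContDiffOn ℝ m
        (fun μ => ((x / ((N:ℝ) * ε) : ℝ) : ℂ) * wL ε N n₀ t (x - (N:ℝ) * ε) μ)
        (Set.Ioi (0:ℝ)) := contDiffOn_cmul (wL_contDiffOn _ m)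
    have h2 : ContDiffOn ℝ m
        (fun μ => ∑ p ∈ Finset.range (n₀+1) ×ˢ Finset.Icc 1 N,
          ((((p.1 : ℝ) + 1 - ((p.2 : ℝ) - 1) / N) * t p.2 p.1 : ℝ) : ℂ) *
            wL ε N n₀ t (x + ((N : ℝ) * p.1 - p.2 + 1) * ε) μ)
        (Set.Ioi (0:ℝ)) := ContDiffOn.sum fun p _ => contDiffOn_cmul (wL_contDiffOn _ m)
    rw [show (fun μ => ((x / ((N:ℝ) * ε) : ℝ) : ℂ) * wL ε N n₀ t (x - (N:ℝ) * ε) μ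
          + ∑ p ∈ Finset.range (n₀+1) ×ˢ Finset.Icc 1 N,
            ((((p.1 : ℝ) + 1 - ((p.2 : ℝ) - 1) / N) * t p.2 p.1 : ℝ) : ℂ) *
              wL ε N n₀ t (x + ((N : ℝ) * p.1 - p.2 + 1) * ε) μ)
        = (fun μ => ((x / ((N:ℝ) * ε) : ℝ) : ℂ) * wL ε N n₀ t (x - (N:ℝ) * ε) μ)
          + (fun μ => ∑ p ∈ Finset.range (n₀+1) ×ˢ Finset.Icc 1 N,
            ((((p.1 : ℝ) + 1 - ((p.2 : ℝ) - 1) / N) * t p.2 p.1 : ℝ) : ℂ) *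
              wL ε N n₀ t (x + ((N : ℝ) * p.1 - p.2 + 1) * ε) μ) from rfl,
      iteratedDerivWithin_add hmem (uniqueDiffOn_Ioi 0) (h1 lam hmem) (h2 lam hmem),
      iteratedDerivWithin_cmul _ (wL_contDiffOn _ m) hmem,
      linWithin _ _ _ (fun p => wL_contDiffOn _ m) hmem]
    simp only [iteratedDerivWithin_Ioi _ _ hmem]

lemma GammaL_const_mul (C : ℂ) (g : ℝ → ℂ) :
    GammaL ε N n₀ t (fun y => C * g y) = fun x => C * GammaL ε N n₀ t g x := by
  funext x
  unfold GammaL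
  beta_reduce
  simp only [mul_add, Finset.mul_sum]
  congr 1
  · ring
  · exact Finset.sum_congr rfl fun n _ => Finset.sum_congr rfl fun α _ => by ring

lemma GammaL_iter_const_mul (C : ℂ) :
    ∀ (m : ℕ) (g : ℝ → ℂ),
      (fun f => GammaL ε N n₀ t f)^[m] (fun y => C * g y)
        = fun x => C * (fun f => GammaL ε N n₀ t f)^[m] g x := by
  intro m
  induction m with
  | zero => intro g; rfl
  | succ m ih =>
    intro g
    simp only [Function.iterate_succ_apply]
    rw [GammaL_const_mul C g]
    exact ih (GammaL ε N n₀ t g)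

end Aux

/-- (i) `(Γ_L^m (Λ^{Nl} w_L(·,λ)))(x) = λ^l·(∂^m w_L/∂λ^m)(x, λ)`, and
(ii) `(Λ^{Nl} (Γ_L^m w_L(·,λ)))(x) = (∂^m/∂λ^m)(λ^l·w_L(x, λ))`:
the relations `M_L^m 𝔏^l w_L = λ^l ∂_λ^m w_L` and
`𝔏^l M_L^m w_L = ∂_λ^m(λ^l w_L)` at the level of the free wave function. -/
theorem wL_ML_relations (ε : ℝ) (hε : ε ≠ 0) (N : ℕ) (hN : 0 < N) (n₀ : ℕ)
    (t : ℕ → ℕ → ℝ) (lam : ℝ) (hlam : 0 < lam) (m l : ℕ) (x : ℝ) :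
    ((fun f => GammaL ε N n₀ t f)^[m]
        (fun y => wL ε N n₀ t (y + ((N : ℝ) * l) * ε) lam)) x =
      (lam : ℂ) ^ l * iteratedDeriv m (fun μ : ℝ => wL ε N n₀ t x μ) lam ∧
    ((fun f => GammaL ε N n₀ t f)^[m] (fun y => wL ε N n₀ t y lam))
        (x + ((N : ℝ) * l) * ε) =
      iteratedDeriv m (fun μ : ℝ => (μ : ℂ) ^ l * wL ε N n₀ t x μ) lam := by
  have hN' : (N : ℝ) ≠ 0 := Nat.cast_ne_zero.mpr hN.ne'
  have hdiv : ((N:ℝ) * l) / N = (l : ℝ) := by field_simp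
  constructor
  · have heq : (fun y => wL ε N n₀ t (y + ((N : ℝ) * l) * ε) lam)
        = fun y => ((lam : ℂ)) ^ l * wL ε N n₀ t y lam := by
      funext y
      rw [wL_shift hε hN y _ hlam, hdiv, Real.rpow_natCast, Complex.ofReal_pow]
    rw [heq, GammaL_iter_const_mul]
    exact congrArg _ (GammaL_iter_wL hε hN lam hlam m x)
  · rw [GammaL_iter_wL hε hN lam hlam m (x + ((N : ℝ) * l) * ε)]
    apply Filter.EventuallyEq.iteratedDeriv_eq
    filter_upwards [isOpen_Ioi.mem_nhds (show lam ∈ Set.Ioi (0:ℝ) from hlam)] with μ hμ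
    rw [wL_shift hε hN x _ hμ, hdiv, Real.rpow_natCast, Complex.ofReal_pow]
end

section
/- Fix ε ∈ ℝ with ε ≠ 0, a positive integer M, a natural number n₀, real constants t_{β,n} for −M+1 ≤ β ≤ 0, 0 ≤ n ≤ n₀, and λ > 0, and let w_R(x,λ) = exp(−Σ_{n=0}^{n₀} Σ_{β=−M+1}^{0} λ^{−(n+1+β/M)}·t_{β,n} + (x/(Mε))·log λ). Let D denote the differential operator D = −λ²·∂/∂λ (differentiation with respect to λ^{−1}). Then for all natural numbers m, l and all x ∈ ℝ: (i) (Γ_R^m (Λ^{−Ml} w_R(·,λ)))(x) = λ^{−l}·(D^m w_R)(x, λ), and (ii) (Λ^{−Ml} (Γ_R^m w_R(·,λ)))(x) = D^m(λ^{−l}·w_R(x, λ)), where Γ_R^m denotes the m-fold composition of Γ_R and both Γ_R and Λ^{−Ml} act in the x-variable. (These are the relations M_R^m 𝔏^l w_R = λ^{−l} ∂_{λ^{−1}}^m w_R and 𝔏^l M_R^m w_R = ∂_{λ^{−1}}^m(λ^{−l} w_R) at the level of the free wave function.) -/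
/-- The truncated Orlov–Schulman operator `Γ_R`:
`(Γ_R f)(x) = −(x/(Mε))·f(x + Mε)
  − Σ_{n=0}^{n₀} Σ_{β=−M+1}^{0} (n + 1 + β/M)·t_{β,n}·f(x − (Mn + β)ε)`. -/
noncomputable def GammaR (ε : ℝ) (M n₀ : ℕ) (t : ℤ → ℕ → ℝ) (f : ℝ → ℂ) (x : ℝ) : ℂ :=
  -(((x / (M * ε)) : ℝ) : ℂ) * f (x + M * ε) -
    ∑ n ∈ Finset.range (n₀ + 1), ∑ β ∈ Finset.Icc (-(M : ℤ) + 1) 0,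
      ((((n : ℝ) + 1 + (β : ℝ) / M) * t β n : ℝ) : ℂ) *
        f (x - ((M : ℝ) * n + (β : ℝ)) * ε)

/-- The free wave function
`w_R(x,λ) = exp(−Σ_{n=0}^{n₀} Σ_{β=−M+1}^{0} λ^{−(n+1+β/M)}·t_{β,n} + (x/(Mε))·log λ)`. -/
noncomputable def wR (ε : ℝ) (M n₀ : ℕ) (t : ℤ → ℕ → ℝ) (x lam : ℝ) : ℂ :=
  Complex.exp
    (((-(∑ n ∈ Finset.range (n₀ + 1), ∑ β ∈ Finset.Icc (-(M : ℤ) + 1) 0,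
        lam ^ (-((n : ℝ) + 1 + (β : ℝ) / M)) * t β n) +
      (x / (M * ε)) * Real.log lam : ℝ)) : ℂ)

/-- The differential operator `D = −λ²·∂/∂λ` (differentiation with respect to `λ⁻¹`). -/
noncomputable def Dop (f : ℝ → ℂ) (lam : ℝ) : ℂ := -(lam : ℂ) ^ 2 * deriv f lam

section Aux

variable (ε : ℝ) (M n₀ : ℕ) (t : ℤ → ℕ → ℝ)

lemma wR_shift (x c lam : ℝ) :
    wR ε M n₀ t (x + c) lam
      = Complex.exp (((c / (M * ε)) * Real.log lam : ℝ) : ℂ) * wR ε M n₀ t x lam := by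
  unfold wR
  rw [← Complex.exp_add]
  congr 1
  push_cast
  ring

lemma exp_rlog (lam r : ℝ) (hlam : 0 < lam) :
    Complex.exp ((r * Real.log lam : ℝ) : ℂ) = ((lam ^ r : ℝ) : ℂ) := by
  rw [Real.rpow_def_of_pos hlam, Complex.ofReal_exp, mul_comm]

lemma GammaR_smul (c : ℂ) (f : ℝ → ℂ) (x : ℝ) :
    GammaR ε M n₀ t (fun y => c * f y) x = c * GammaR ε M n₀ t f x := by
  unfold GammaR
  rw [mul_sub, Finset.mul_sum]
  congr 1
  · ring
  · refine Finset.sum_congr rfl fun n _ => ?_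
    rw [Finset.mul_sum]
    exact Finset.sum_congr rfl fun β _ => by ring

lemma GammaR_iterate_smul (c : ℂ) (f : ℝ → ℂ) :
    ∀ m : ℕ, ((fun g => GammaR ε M n₀ t g)^[m] (fun y => c * f y))
      = fun x => c * ((fun g => GammaR ε M n₀ t g)^[m] f) x := by
  intro m
  induction m with
  | zero => rfl
  | succ m ih =>
    rw [Function.iterate_succ_apply', Function.iterate_succ_apply', ih]
    funext x
    exact GammaR_smul ε M n₀ t c _ x

noncomputable def hIter (m : ℕ) (x lam : ℝ) : ℂ :=
  ((fun f => GammaR ε M n₀ t f)^[m] (fun y => wR ε M n₀ t y lam)) x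

lemma hIter_succ (m : ℕ) (x lam : ℝ) :
    hIter ε M n₀ t (m + 1) x lam
      = GammaR ε M n₀ t (fun y => hIter ε M n₀ t m y lam) x := by
  unfold hIter
  rw [Function.iterate_succ_apply']

lemma hIter_one (hε : ε ≠ 0) (hM : 0 < M) (x lam : ℝ) (hlam : 0 < lam) :
    hIter ε M n₀ t 1 x lam
      = -(lam : ℂ) ^ 2 * (wR ε M n₀ t x lam *
          (((-(∑ n ∈ Finset.range (n₀ + 1), ∑ β ∈ Finset.Icc (-(M : ℤ) + 1) 0,
              (-((n : ℝ) + 1 + (β : ℝ) / M)) * lam ^ (-((n : ℝ) + 1 + (β : ℝ) / M) - 1) * t β n) +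
            (x / (M * ε)) * lam⁻¹ : ℝ)) : ℂ)) := by
  have hMR : (M : ℝ) ≠ 0 := Nat.cast_ne_zero.2 hM.ne'
  have hMε : (M : ℝ) * ε ≠ 0 := mul_ne_zero hMR hε
  have hlC : (lam : ℂ) ≠ 0 := by exact_mod_cast hlam.ne'
  have s1 : wR ε M n₀ t (x + (M : ℝ) * ε) lam = (lam : ℂ) * wR ε M n₀ t x lam := by
    rw [wR_shift, div_self hMε, one_mul, ← Complex.ofReal_exp, Real.exp_log hlam]
  have s2 : ∀ (n : ℕ) (β : ℤ), wR ε M n₀ t (x - ((M : ℝ) * n + (β : ℝ)) * ε) lam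
      = ((lam ^ (-((n : ℝ) + (β : ℝ) / M)) : ℝ) : ℂ) * wR ε M n₀ t x lam := by
    intro n β
    have h1 : x - ((M : ℝ) * n + (β : ℝ)) * ε = x + (-(((M : ℝ) * n + (β : ℝ)) * ε)) := by ring
    have h2 : (-(((M : ℝ) * n + (β : ℝ)) * ε)) / ((M : ℝ) * ε) = -((n : ℝ) + (β : ℝ) / M) := by
      field_simp
    rw [h1, wR_shift, h2, exp_rlog _ _ hlam]
  have key2 : ∀ n ∈ Finset.range (n₀ + 1), ∀ β ∈ Finset.Icc (-(M : ℤ) + 1) 0,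
      ((((n : ℝ) + 1 + (β : ℝ) / M) * t β n : ℝ) : ℂ) *
          (((lam ^ (-((n : ℝ) + (β : ℝ) / M)) : ℝ) : ℂ) * wR ε M n₀ t x lam)
        = (-(lam : ℂ) ^ 2 * wR ε M n₀ t x lam) *
            ((((-((n : ℝ) + 1 + (β : ℝ) / M)) * lam ^ (-((n : ℝ) + 1 + (β : ℝ) / M) - 1) * t β n : ℝ)) : ℂ) := by
    intro n _ β _
    have hr : (lam ^ (-((n : ℝ) + (β : ℝ) / M)) : ℝ)
        = lam ^ 2 * lam ^ (-((n : ℝ) + 1 + (β : ℝ) / M) - 1) := by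
      rw [← Real.rpow_natCast lam 2, ← Real.rpow_add hlam]
      congr 1
      ring
    rw [hr]
    push_cast
    ring
  rw [hIter_succ]
  show GammaR ε M n₀ t (fun y => wR ε M n₀ t y lam) x = _
  unfold GammaR
  beta_reduce
  rw [s1]
  have hsum : ∑ n ∈ Finset.range (n₀ + 1), ∑ β ∈ Finset.Icc (-(M : ℤ) + 1) 0,
      ((((n : ℝ) + 1 + (β : ℝ) / M) * t β n : ℝ) : ℂ) * wR ε M n₀ t (x - ((M : ℝ) * n + (β : ℝ)) * ε) lam
      = ∑ n ∈ Finset.range (n₀ + 1), ∑ β ∈ Finset.Icc (-(M : ℤ) + 1) 0,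
        (-(lam : ℂ) ^ 2 * wR ε M n₀ t x lam) *
            ((((-((n : ℝ) + 1 + (β : ℝ) / M)) * lam ^ (-((n : ℝ) + 1 + (β : ℝ) / M) - 1) * t β n : ℝ)) : ℂ) := by
    refine Finset.sum_congr rfl fun n hn => Finset.sum_congr rfl fun β hβ => ?_
    rw [s2 n β]
    exact key2 n hn β hβ
  rw [hsum]
  simp only [← Finset.mul_sum]
  rw [Complex.ofReal_add, Complex.ofReal_neg, Complex.ofReal_mul, Complex.ofReal_inv]
  simp only [Complex.ofReal_sum]
  have hL : (lam : ℂ) * ((lam : ℂ))⁻¹ = 1 := mul_inv_cancel₀ hlC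
  linear_combination (((x / ((M : ℝ) * ε) : ℝ)) : ℂ) * wR ε M n₀ t x lam * (lam : ℂ) * hL

end Aux

section Key
variable (ε : ℝ) (M n₀ : ℕ) (t : ℤ → ℕ → ℝ)

lemma key_deriv (hε : ε ≠ 0) (hM : 0 < M) :
    ∀ (m : ℕ) (x lam : ℝ), 0 < lam →
      HasDerivAt (fun μ => hIter ε M n₀ t m x μ)
        (-(hIter ε M n₀ t (m + 1) x lam) / (lam : ℂ) ^ 2) lam := by
  intro m
  induction m with
  | zero =>
    intro x lam hlam
    have hlC : (lam : ℂ) ≠ 0 := by exact_mod_cast hlam.ne'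
    have hsum : HasDerivAt
        (fun μ => ∑ n ∈ Finset.range (n₀ + 1), ∑ β ∈ Finset.Icc (-(M : ℤ) + 1) 0,
          μ ^ (-((n : ℝ) + 1 + (β : ℝ) / M)) * t β n)
        (∑ n ∈ Finset.range (n₀ + 1), ∑ β ∈ Finset.Icc (-(M : ℤ) + 1) 0,
          ((-((n : ℝ) + 1 + (β : ℝ) / M)) * lam ^ (-((n : ℝ) + 1 + (β : ℝ) / M) - 1)) * t β n) lam :=
      HasDerivAt.fun_sum fun n _ => HasDerivAt.fun_sum fun β _ =>
        (Real.hasDerivAt_rpow_const (Or.inl hlam.ne')).mul_const _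
    have hlog := (Real.hasDerivAt_log hlam.ne').const_mul (x / ((M : ℝ) * ε))
    have hg := (hsum.neg).add hlog
    have hw := hg.ofReal_comp.cexp
    have hval : -(hIter ε M n₀ t (0 + 1) x lam) / (lam : ℂ) ^ 2
        = Complex.exp (((-(∑ n ∈ Finset.range (n₀ + 1), ∑ β ∈ Finset.Icc (-(M : ℤ) + 1) 0,
            lam ^ (-((n : ℝ) + 1 + (β : ℝ) / M)) * t β n) +
          (x / (M * ε)) * Real.log lam : ℝ)) : ℂ) *
          ((-(∑ n ∈ Finset.range (n₀ + 1), ∑ β ∈ Finset.Icc (-(M : ℤ) + 1) 0,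
            ((-((n : ℝ) + 1 + (β : ℝ) / M)) * lam ^ (-((n : ℝ) + 1 + (β : ℝ) / M) - 1)) * t β n) +
            (x / ((M : ℝ) * ε)) * lam⁻¹ : ℝ) : ℂ) := by
      rw [zero_add, hIter_one ε M n₀ t hε hM x lam hlam]
      rw [neg_mul, neg_neg, mul_div_cancel_left₀ _ (pow_ne_zero 2 hlC)]
      rfl
    rw [hval]
    exact hw
  | succ m ih =>
    intro x lam hlam
    have hlC : (lam : ℂ) ≠ 0 := by exact_mod_cast hlam.ne'
    have hrec : (fun μ => hIter ε M n₀ t (m + 1) x μ)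
        = fun μ => -(((x / (M * ε)) : ℝ) : ℂ) * hIter ε M n₀ t m (x + M * ε) μ -
            ∑ n ∈ Finset.range (n₀ + 1), ∑ β ∈ Finset.Icc (-(M : ℤ) + 1) 0,
              ((((n : ℝ) + 1 + (β : ℝ) / M) * t β n : ℝ) : ℂ) *
                hIter ε M n₀ t m (x - ((M : ℝ) * n + (β : ℝ)) * ε) μ := by
      funext μ
      rw [hIter_succ]
      rfl
    rw [hrec]
    have h1 := (ih (x + M * ε) lam hlam).const_mul (-(((x / (M * ε)) : ℝ) : ℂ))
    have h2 : HasDerivAt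
        (fun μ => ∑ n ∈ Finset.range (n₀ + 1), ∑ β ∈ Finset.Icc (-(M : ℤ) + 1) 0,
          ((((n : ℝ) + 1 + (β : ℝ) / M) * t β n : ℝ) : ℂ) *
            hIter ε M n₀ t m (x - ((M : ℝ) * n + (β : ℝ)) * ε) μ)
        (∑ n ∈ Finset.range (n₀ + 1), ∑ β ∈ Finset.Icc (-(M : ℤ) + 1) 0,
          ((((n : ℝ) + 1 + (β : ℝ) / M) * t β n : ℝ) : ℂ) *
            (-(hIter ε M n₀ t (m + 1) (x - ((M : ℝ) * n + (β : ℝ)) * ε) lam) / (lam : ℂ) ^ 2)) lam :=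
      HasDerivAt.fun_sum fun n _ => HasDerivAt.fun_sum fun β _ =>
        (ih _ lam hlam).const_mul _
    have h3 := h1.fun_sub h2
    convert h3 using 1
    · rfl
    rw [hIter_succ ε M n₀ t (m + 1) x lam]
    unfold GammaR
    beta_reduce
    rw [show (∑ n ∈ Finset.range (n₀ + 1), ∑ β ∈ Finset.Icc (-(M : ℤ) + 1) 0,
          ((((n : ℝ) + 1 + (β : ℝ) / M) * t β n : ℝ) : ℂ) *
            (-(hIter ε M n₀ t (m + 1) (x - ((M : ℝ) * n + (β : ℝ)) * ε) lam) / (lam : ℂ) ^ 2))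
        = (∑ n ∈ Finset.range (n₀ + 1), ∑ β ∈ Finset.Icc (-(M : ℤ) + 1) 0,
          ((((n : ℝ) + 1 + (β : ℝ) / M) * t β n : ℝ) : ℂ) *
            hIter ε M n₀ t (m + 1) (x - ((M : ℝ) * n + (β : ℝ)) * ε) lam) * (-1 / (lam : ℂ) ^ 2) from by
      rw [Finset.sum_mul]
      refine Finset.sum_congr rfl fun n _ => ?_
      rw [Finset.sum_mul]
      exact Finset.sum_congr rfl fun β _ => by ring]
    ring

end Key

section Bridge
variable (ε : ℝ) (M n₀ : ℕ) (t : ℤ → ℕ → ℝ)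

lemma Dop_iterate_congr (f g : ℝ → ℂ) (h : ∀ μ ∈ Set.Ioi (0:ℝ), f μ = g μ) :
    ∀ (m : ℕ), ∀ lam ∈ Set.Ioi (0:ℝ),
      ((fun F => Dop F)^[m] f) lam = ((fun F => Dop F)^[m] g) lam := by
  intro m
  induction m with
  | zero => exact h
  | succ m ih =>
    intro lam hlam
    rw [Function.iterate_succ_apply', Function.iterate_succ_apply']
    unfold Dop
    congr 1
    exact Filter.EventuallyEq.deriv_eq
      (Filter.eventuallyEq_of_mem (isOpen_Ioi.mem_nhds hlam) ih)

lemma Dop_iterate (hε : ε ≠ 0) (hM : 0 < M) (x : ℝ) :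
    ∀ (m : ℕ) (lam : ℝ), 0 < lam →
      ((fun f => Dop f)^[m] (fun μ => wR ε M n₀ t x μ)) lam = hIter ε M n₀ t m x lam := by
  intro m
  induction m with
  | zero => intro lam _; rfl
  | succ m ih =>
    intro lam hlam
    have hlC : ((lam : ℂ)) ^ 2 ≠ 0 := pow_ne_zero 2 (by exact_mod_cast hlam.ne')
    rw [Function.iterate_succ_apply']
    show -(lam : ℂ) ^ 2 * deriv ((fun f => Dop f)^[m] fun μ => wR ε M n₀ t x μ) lam = _
    have hd : deriv ((fun f => Dop f)^[m] fun μ => wR ε M n₀ t x μ) lam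
        = -(hIter ε M n₀ t (m + 1) x lam) / (lam : ℂ) ^ 2 := by
      rw [Filter.EventuallyEq.deriv_eq
        (Filter.eventuallyEq_of_mem (isOpen_Ioi.mem_nhds hlam) fun μ hμ => ih μ hμ)]
      exact (key_deriv ε M n₀ t hε hM m x lam hlam).deriv
    rw [hd]
    field_simp
    exact mul_div_cancel_left₀ _ (by exact_mod_cast hlam.ne')

lemma wR_shift_zpow (hε : ε ≠ 0) (hM : 0 < M) (l : ℕ) (y lam : ℝ) (hlam : 0 < lam) :
    wR ε M n₀ t (y - ((M : ℝ) * l) * ε) lam = (lam : ℂ) ^ (-(l : ℤ)) * wR ε M n₀ t y lam := by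
  have hMε : (M : ℝ) * ε ≠ 0 := mul_ne_zero (Nat.cast_ne_zero.2 hM.ne') hε
  rw [show y - ((M : ℝ) * l) * ε = y + (-(((M : ℝ) * l) * ε)) from by ring, wR_shift]
  congr 1
  rw [show (-(((M : ℝ) * l) * ε)) / ((M : ℝ) * ε) = ((-(l : ℤ) : ℤ) : ℝ) from by
      push_cast; field_simp]
  rw [exp_rlog _ _ hlam, Real.rpow_intCast, Complex.ofReal_zpow]

end Bridge


/-- (i) `(Γ_R^m (Λ^{−Ml} w_R(·,λ)))(x) = λ^{−l}·(D^m w_R)(x, λ)`, and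
(ii) `(Λ^{−Ml} (Γ_R^m w_R(·,λ)))(x) = D^m(λ^{−l}·w_R(x, λ))`:
the relations `M_R^m 𝔏^l w_R = λ^{−l} ∂_{λ^{−1}}^m w_R` and
`𝔏^l M_R^m w_R = ∂_{λ^{−1}}^m(λ^{−l} w_R)` at the level of the free wave function. -/
theorem wR_MR_relations (ε : ℝ) (hε : ε ≠ 0) (M : ℕ) (hM : 0 < M) (n₀ : ℕ)
    (t : ℤ → ℕ → ℝ) (lam : ℝ) (hlam : 0 < lam) (m l : ℕ) (x : ℝ) :
    ((fun f => GammaR ε M n₀ t f)^[m]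
        (fun y => wR ε M n₀ t (y - ((M : ℝ) * l) * ε) lam)) x =
      (lam : ℂ) ^ (-(l : ℤ)) * ((fun f => Dop f)^[m] (fun μ => wR ε M n₀ t x μ)) lam ∧
    ((fun f => GammaR ε M n₀ t f)^[m] (fun y => wR ε M n₀ t y lam))
        (x - ((M : ℝ) * l) * ε) =
      ((fun f => Dop f)^[m] (fun μ => (μ : ℂ) ^ (-(l : ℤ)) * wR ε M n₀ t x μ)) lam := by
  constructor
  · have hfun : (fun y => wR ε M n₀ t (y - ((M : ℝ) * l) * ε) lam)
        = fun y => (lam : ℂ) ^ (-(l : ℤ)) * wR ε M n₀ t y lam := by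
      funext y
      exact wR_shift_zpow ε M n₀ t hε hM l y lam hlam
    rw [hfun, GammaR_iterate_smul ε M n₀ t _ _ m]
    rw [Dop_iterate ε M n₀ t hε hM x m lam hlam]
    rfl
  · have h2 := Dop_iterate_congr (fun μ => wR ε M n₀ t (x - ((M : ℝ) * l) * ε) μ)
      (fun μ => (μ : ℂ) ^ (-(l : ℤ)) * wR ε M n₀ t x μ)
      (fun μ hμ => wR_shift_zpow ε M n₀ t hε hM l x μ hμ) m lam hlam
    rw [← h2, Dop_iterate ε M n₀ t hε hM _ m lam hlam]
    rfl
end
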